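/- Limit of the normalized information matrix and its nonsingularity (proof of Theorem 7.1): Let (z_i, δ_i)_{i≥1} be a sequence of covariate profiles and treatment indicators such that for every stratum s ∈ S, N_n(s)/n → p(s) with p(s) > 0 and Ñ_n(s)/N_n(s) → π*(s) with π*(s) ∈ (0,1), where N_n(s) and Ñ_n(s) are computed from the first n patients. Define g_A(s) = (1, 0, f(s)ᵗ, 0_pᵗ)ᵗ and g_B(s) = (0, 1, 0_pᵗ, f(s)ᵗ)ᵗ in ℝ^{2+2p}. Then (1/n)·X_nᵗX_n converges, as n → ∞, to the matrix M(π*) = Σ_{s∈S} p(s)·[π*(s)·g_A(s)g_A(s)ᵗ + (1−π*(s))·g_B(s)g_B(s)ᵗ], and M(π*) is positive definite (in particular nonsingular). -/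

import Mathlib

/-!
Grouping the patients by stratum and arm gives
`Xₙᵀ Xₙ = ∑ₛ (Ñₙ(s) g_A(s) g_A(s)ᵗ + (Nₙ(s) - Ñₙ(s)) g_B(s) g_B(s)ᵗ)`, and
`Ñₙ(s)/n = (Ñₙ(s)/Nₙ(s)) · (Nₙ(s)/n) → π*(s) p(s)`, which yields the limit.
The limit is a Gram matrix `Gᵀ D G` of the vectors `g_A(s)`, `g_B(s)` with positive diagonal
weights `D`, so it is positive definite once `G` is injective: a vector orthogonal to all
`g_A(s)`, `g_B(s)` gives affine functions `s ↦ c + f(s)ᵗ v` vanishing on every stratum, and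
evaluating them at `(0,0)`, `(j,0)`, `(0,l)`, `(j,l)` forces `c = 0` and `v = 0`.
-/

open Matrix Finset Filter

noncomputable section

/-- The set of strata `{0,…,J} × {0,…,L}`. -/
abbrev Stratum (J L : ℕ) := Fin (J + 1) × Fin (L + 1)

/-- Index type for the `p = J + L + J·L` dummy/interaction coordinates. -/
abbrev Idx (J L : ℕ) := Fin J ⊕ Fin L ⊕ (Fin J × Fin L)

/-- Full dummy coding of a stratum, with all interactions. -/
def dummy (J L : ℕ) (s : Stratum J L) : Idx J L → ℝ := fun k =>
  match k with
  | Sum.inl j' => if (s.1 : ℕ) = (j' : ℕ) + 1 then 1 else 0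
  | Sum.inr (Sum.inl l') => if (s.2 : ℕ) = (l' : ℕ) + 1 then 1 else 0
  | Sum.inr (Sum.inr q) =>
      if (s.1 : ℕ) = (q.1 : ℕ) + 1 ∧ (s.2 : ℕ) = (q.2 : ℕ) + 1 then 1 else 0

/-- Column index type of the design matrix: dimension `2 + 2p`. -/
abbrev Cols (J L : ℕ) := Fin 2 ⊕ (Idx J L ⊕ Idx J L)

/-- The design matrix `X_n` of the first `n` patients. -/
def designX (J L n : ℕ) (z : ℕ → Stratum J L) (δ : ℕ → Bool) :
    Matrix (Fin n) (Cols J L) ℝ :=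
  Matrix.of fun i c =>
    match c with
    | Sum.inl a => if a = 0 then (if δ i then (1 : ℝ) else 0) else (if δ i then 0 else 1)
    | Sum.inr (Sum.inl k) => if δ i then dummy J L (z i) k else 0
    | Sum.inr (Sum.inr k) => if δ i then 0 else dummy J L (z i) k

/-- `N_n(j,l)`: the size of stratum `(j,l)` among the first `n` patients. -/
def strN (J L n : ℕ) (z : ℕ → Stratum J L) (s : Stratum J L) : ℕ :=
  ((Finset.range n).filter fun i => z i = s).card

/-- `Ñ_n(j,l)`: the number of the first `n` patients of stratum `(j,l)` assigned to `A`. -/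
def strNA (J L n : ℕ) (z : ℕ → Stratum J L) (δ : ℕ → Bool) (s : Stratum J L) : ℕ :=
  ((Finset.range n).filter fun i => z i = s ∧ δ i = true).card

/-- `g_A(s) = (1, 0, f(s)ᵗ, 0ᵗ)ᵗ`. -/
def gA (J L : ℕ) (s : Stratum J L) : Cols J L → ℝ := fun c =>
  match c with
  | Sum.inl a => if a = 0 then 1 else 0
  | Sum.inr (Sum.inl k) => dummy J L s k
  | Sum.inr (Sum.inr _) => 0

/-- `g_B(s) = (0, 1, 0ᵗ, f(s)ᵗ)ᵗ`. -/
def gB (J L : ℕ) (s : Stratum J L) : Cols J L → ℝ := fun c =>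
  match c with
  | Sum.inl a => if a = 0 then 0 else 1
  | Sum.inr (Sum.inl _) => 0
  | Sum.inr (Sum.inr k) => dummy J L s k

/-- The limiting information matrix
`M(π*) = Σ_s p(s)·[π*(s)·g_A(s)g_A(s)ᵗ + (1−π*(s))·g_B(s)g_B(s)ᵗ]`. -/
def infoM (J L : ℕ) (p πs : Stratum J L → ℝ) : Matrix (Cols J L) (Cols J L) ℝ :=
  ∑ s : Stratum J L,
    p s • (πs s • Matrix.vecMulVec (gA J L s) (gA J L s) +
      (1 - πs s) • Matrix.vecMulVec (gB J L s) (gB J L s))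

theorem Matrix.transpose_mul_self_eq_sum_vecMulVec {m n R : Type*} [Fintype m]
    [CommSemiring R] (X : Matrix m n R) :
    Xᵀ * X = ∑ i, vecMulVec (X i) (X i) := by
  ext a b
  simp [mul_apply, sum_apply, vecMulVec_apply]

theorem Matrix.posDef_sum_smul_vecMulVec_self {ι n : Type*} [Fintype ι] [Fintype n]
    {w : ι → ℝ} {v : ι → n → ℝ} (hw : ∀ i, 0 < w i)
    (hv : ∀ x, (∀ i, v i ⬝ᵥ x = 0) → x = 0) :
    (∑ i, w i • vecMulVec (v i) (v i)).PosDef := by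
  classical
  have hgram : ∑ i, w i • vecMulVec (v i) (v i) = (of v)ᵀ * diagonal w * of v := by
    ext a b
    rw [mul_apply]
    simp only [sum_apply, smul_apply, vecMulVec_apply, smul_eq_mul, mul_diagonal,
      transpose_apply, of_apply]
    exact sum_congr rfl fun i _ => by ring
  have hinj : Function.Injective (of v).mulVec := fun x y hxy =>
    sub_eq_zero.mp <| hv _ fun i => by
      rw [dotProduct_sub, sub_eq_zero]; exact congrFun hxy i
  rw [hgram]
  exact (PosDef.diagonal hw).conjTranspose_mul_mul_same hinj

theorem Filter.Tendsto.div_trans {α : Type*} {l : Filter α} {a b c : α → ℝ} {x y : ℝ}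
    (hab : ∀ n, b n = 0 → a n = 0) (ha : Tendsto (fun n => a n / b n) l (nhds x))
    (hb : Tendsto (fun n => b n / c n) l (nhds y)) :
    Tendsto (fun n => a n / c n) l (nhds (x * y)) := by
  -- `hab` makes `a / c = (a / b) * (b / c)` hold also where `b` vanishes and `a / b` is junk.
  refine (ha.mul hb).congr fun n => ?_
  by_cases h : b n = 0
  · simp [h, hab n h]
  · exact div_mul_div_cancel₀ h

section Design

variable {J L : ℕ}

theorem sum_range_ite_eq_sum_strata {M : Type*} [AddCommGroup M] [Module ℝ M] (n : ℕ)
    (z : ℕ → Stratum J L) (δ : ℕ → Bool) (f g : Stratum J L → M) :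
    ∑ i ∈ range n, (if δ i then f (z i) else g (z i)) =
      ∑ s, ((strNA J L n z δ s : ℝ) • f s +
        ((strN J L n z s : ℝ) - strNA J L n z δ s) • g s) := by
  rw [← sum_fiberwise (range n) z]
  refine sum_congr rfl fun s _ => ?_
  have hcard := card_filter_add_card_filter_not (s := (range n).filter fun i => z i = s)
    (p := fun i => δ i = true)
  simp only [filter_filter] at hcard
  rw [sum_congr rfl fun i hi => by rw [(mem_filter.mp hi).2], sum_ite, sum_const, sum_const,
    filter_filter, filter_filter, ← Nat.cast_smul_eq_nsmul ℝ, ← Nat.cast_smul_eq_nsmul ℝ]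
  congr 3
  rw [strN, strNA, ← hcard]
  push_cast
  ring

theorem designX_row (n : ℕ) (z : ℕ → Stratum J L) (δ : ℕ → Bool) (i : Fin n) :
    designX J L n z δ i = if δ i then gA J L (z i) else gB J L (z i) := by
  ext (a | k | k) <;> cases h : δ i <;> simp [designX, gA, gB, h]

theorem designX_transpose_mul_self (n : ℕ) (z : ℕ → Stratum J L) (δ : ℕ → Bool) :
    (designX J L n z δ)ᵀ * designX J L n z δ =
      ∑ s, ((strNA J L n z δ s : ℝ) • vecMulVec (gA J L s) (gA J L s) +
        ((strN J L n z s : ℝ) - strNA J L n z δ s) • vecMulVec (gB J L s) (gB J L s)) := by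
  rw [transpose_mul_self_eq_sum_vecMulVec, ← sum_range_ite_eq_sum_strata]
  simp only [designX_row, apply_ite₂ vecMulVec]
  exact Fin.sum_univ_eq_sum_range
    (fun i => if δ i then vecMulVec (gA J L (z i)) (gA J L (z i))
      else vecMulVec (gB J L (z i)) (gB J L (z i))) n

theorem dummy_zero_zero_dotProduct (v : Idx J L → ℝ) : dummy J L (0, 0) ⬝ᵥ v = 0 := by
  simp [dotProduct, Fintype.sum_sum_type, dummy]

theorem dummy_succ_zero_dotProduct (v : Idx J L → ℝ) (j : Fin J) :
    dummy J L (j.succ, 0) ⬝ᵥ v = v (.inl j) := by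
  simp [dotProduct, Fintype.sum_sum_type, dummy, Fin.val_succ, Fin.val_inj]

theorem dummy_zero_succ_dotProduct (v : Idx J L → ℝ) (l : Fin L) :
    dummy J L (0, l.succ) ⬝ᵥ v = v (.inr (.inl l)) := by
  simp [dotProduct, Fintype.sum_sum_type, dummy, Fin.val_succ, Fin.val_inj]

theorem dummy_succ_succ_dotProduct (v : Idx J L → ℝ) (j : Fin J) (l : Fin L) :
    dummy J L (j.succ, l.succ) ⬝ᵥ v =
      v (.inl j) + (v (.inr (.inl l)) + v (.inr (.inr (j, l)))) := by
  simp [dotProduct, Fintype.sum_sum_type, dummy, Fin.val_succ, Fin.val_inj, ← Prod.mk.injEq]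

theorem eq_zero_of_forall_add_dummy_dotProduct_eq_zero {c : ℝ} {v : Idx J L → ℝ}
    (h : ∀ s, c + dummy J L s ⬝ᵥ v = 0) : c = 0 ∧ v = 0 := by
  have hc : c = 0 := by simpa [dummy_zero_zero_dotProduct] using h (0, 0)
  have hj (j : Fin J) : v (.inl j) = 0 := by
    simpa [hc, dummy_succ_zero_dotProduct] using h (j.succ, 0)
  have hl (l : Fin L) : v (.inr (.inl l)) = 0 := by
    simpa [hc, dummy_zero_succ_dotProduct] using h (0, l.succ)
  refine ⟨hc, funext ?_⟩
  rintro (j | l | ⟨j, l⟩)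
  · exact hj j
  · exact hl l
  · simpa [hc, hj, hl, dummy_succ_succ_dotProduct] using h (j.succ, l.succ)

theorem gA_dotProduct (s : Stratum J L) (x : Cols J L → ℝ) :
    gA J L s ⬝ᵥ x = x (.inl 0) + dummy J L s ⬝ᵥ fun k => x (.inr (.inl k)) := by
  simp [dotProduct, Fintype.sum_sum_type, gA]

theorem gB_dotProduct (s : Stratum J L) (x : Cols J L → ℝ) :
    gB J L s ⬝ᵥ x = x (.inl 1) + dummy J L s ⬝ᵥ fun k => x (.inr (.inr k)) := by
  simp [dotProduct, Fintype.sum_sum_type, gB]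

theorem eq_zero_of_forall_gA_gB_dotProduct_eq_zero {x : Cols J L → ℝ}
    (hA : ∀ s, gA J L s ⬝ᵥ x = 0) (hB : ∀ s, gB J L s ⬝ᵥ x = 0) : x = 0 := by
  obtain ⟨hA0, hAv⟩ := eq_zero_of_forall_add_dummy_dotProduct_eq_zero fun s =>
    (gA_dotProduct s x).symm.trans (hA s)
  obtain ⟨hB0, hBv⟩ := eq_zero_of_forall_add_dummy_dotProduct_eq_zero fun s =>
    (gB_dotProduct s x).symm.trans (hB s)
  funext c
  rcases c with a | k | k
  · fin_cases a
    exacts [hA0, hB0]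
  · exact congrFun hAv k
  · exact congrFun hBv k

theorem infoM_posDef {p πs : Stratum J L → ℝ} (hp : ∀ s, 0 < p s)
    (hπ : ∀ s, πs s ∈ Set.Ioo (0 : ℝ) 1) : (infoM J L p πs).PosDef := by
  have hsum : infoM J L p πs = ∑ i : Stratum J L ⊕ Stratum J L,
      Sum.elim (fun s => p s * πs s) (fun s => p s * (1 - πs s)) i •
        vecMulVec (Sum.elim (gA J L) (gB J L) i) (Sum.elim (gA J L) (gB J L) i) := by
    simp [infoM, Fintype.sum_sum_type, sum_add_distrib, smul_add, smul_smul]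
  rw [hsum]
  refine posDef_sum_smul_vecMulVec_self ?_ fun x hx =>
    eq_zero_of_forall_gA_gB_dotProduct_eq_zero (fun s => hx (.inl s)) (fun s => hx (.inr s))
  rintro (s | s)
  · exact mul_pos (hp s) (hπ s).1
  · exact mul_pos (hp s) (sub_pos.mpr (hπ s).2)

theorem strNA_le_strN (n : ℕ) (z : ℕ → Stratum J L) (δ : ℕ → Bool) (s : Stratum J L) :
    strNA J L n z δ s ≤ strN J L n z s :=
  card_le_card <| monotone_filter_right _ fun _ _ h => h.1

theorem tendsto_inv_smul_designX_transpose_mul_self {z : ℕ → Stratum J L} {δ : ℕ → Bool}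
    {p πs : Stratum J L → ℝ}
    (hN : ∀ s, Tendsto (fun n : ℕ => (strN J L n z s : ℝ) / n) atTop (nhds (p s)))
    (hNA : ∀ s, Tendsto (fun n : ℕ => (strNA J L n z δ s : ℝ) / (strN J L n z s : ℝ))
      atTop (nhds (πs s))) :
    Tendsto (fun n : ℕ => (n : ℝ)⁻¹ • ((designX J L n z δ)ᵀ * designX J L n z δ))
      atTop (nhds (infoM J L p πs)) := by
  have hA (s) : Tendsto (fun n : ℕ => (strNA J L n z δ s : ℝ) / n) atTop
      (nhds (πs s * p s)) :=
    (hNA s).div_trans (fun n h => by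
      rw [Nat.cast_eq_zero] at h ⊢
      exact Nat.eq_zero_of_le_zero (h ▸ strNA_le_strN n z δ s)) (hN s)
  have hX (n : ℕ) : (n : ℝ)⁻¹ • ((designX J L n z δ)ᵀ * designX J L n z δ) =
      ∑ s, (((strNA J L n z δ s : ℝ) / n) • vecMulVec (gA J L s) (gA J L s) +
        ((strN J L n z s : ℝ) / n - (strNA J L n z δ s : ℝ) / n) •
          vecMulVec (gB J L s) (gB J L s)) := by
    simp only [designX_transpose_mul_self, smul_sum, smul_add, smul_smul,
      div_eq_inv_mul, mul_sub]
  have hM : infoM J L p πs = ∑ s, ((πs s * p s) • vecMulVec (gA J L s) (gA J L s) +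
      (p s - πs s * p s) • vecMulVec (gB J L s) (gB J L s)) := by
    simp only [infoM, smul_add, smul_smul]
    congr! 3 <;> ring
  rw [hM, funext hX]
  exact tendsto_finsetSum _ fun s _ =>
    ((hA s).smul_const _).add (((hN s).sub (hA s)).smul_const _)

end Design

theorem info_matrix_limit_general (J L : ℕ)
    (z : ℕ → Stratum J L) (δ : ℕ → Bool) (p πs : Stratum J L → ℝ)
    (hp : ∀ s, 0 < p s) (hπ : ∀ s, πs s ∈ Set.Ioo (0 : ℝ) 1)
    (hN : ∀ s, Tendsto (fun n : ℕ => (strN J L n z s : ℝ) / n) atTop (nhds (p s)))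
    (hNA : ∀ s, Tendsto (fun n : ℕ => (strNA J L n z δ s : ℝ) / (strN J L n z s : ℝ))
      atTop (nhds (πs s))) :
    Tendsto (fun n : ℕ => (n : ℝ)⁻¹ • ((designX J L n z δ)ᵀ * designX J L n z δ))
        atTop (nhds (infoM J L p πs)) ∧
      (infoM J L p πs).PosDef :=
  ⟨tendsto_inv_smul_designX_transpose_mul_self hN hNA, infoM_posDef hp hπ⟩

/-- Limit of the normalized information matrix and its nonsingularity (proof of
Theorem 7.1): if `N_n(s)/n → p(s) > 0` and `Ñ_n(s)/N_n(s) → π*(s) ∈ (0,1)` for every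
stratum `s`, then `(1/n)·X_nᵗX_n → M(π*)`, and `M(π*)` is positive definite. -/
theorem info_matrix_limit (J L : ℕ) (hJ : 1 ≤ J) (hL : 1 ≤ L)
    (z : ℕ → Stratum J L) (δ : ℕ → Bool) (p πs : Stratum J L → ℝ)
    (hp : ∀ s, 0 < p s) (hπ : ∀ s, πs s ∈ Set.Ioo (0 : ℝ) 1)
    (hN : ∀ s, Tendsto (fun n : ℕ => (strN J L n z s : ℝ) / n) atTop (nhds (p s)))
    (hNA : ∀ s, Tendsto (fun n : ℕ => (strNA J L n z δ s : ℝ) / (strN J L n z s : ℝ))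
      atTop (nhds (πs s))) :
    Tendsto (fun n : ℕ => (n : ℝ)⁻¹ • ((designX J L n z δ)ᵀ * designX J L n z δ))
        atTop (nhds (infoM J L p πs)) ∧
      (infoM J L p πs).PosDef :=
  info_matrix_limit_general J L z δ p πs hp hπ hN hNA
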